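/- arXiv:1703.03638 — 5 statements merged into one kernel-verified Lean document; each statement's English description precedes it below -/
import Mathlib

section
/- If a dynamic coherent risk measure ρ = (ρ_t)_{t∈𝕋} is strongly time-consistent, then for any collection of numéraires V = (v^0,…,v^d) with v^0 ≡ 1, ρ is predictably V-time-consistent. Moreover, in the case d = 0 with V ≡ 1, strong time-consistency and predictable V-time-consistency coincide. -/
/-!
Each `ρ_t` is monotone, subadditive and translation invariant under `F_t`-measurable cash
amounts, all three read off the minimality of `ρ_t(X)` among `F_t`-measurable bounds of the
Bayes formula. Translation invariance makes `ρ_{t+1}(X)` the least `F_{t+1}`-measurable `W`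
with `X - W ∈ A_{t+1}`, and subadditivity gives `ρ_{t+1}(X) ≤ ρ_{t+1}(X')` whenever
`X - X' ∈ A_{t+1}`. Under strong time-consistency `ρ_t(X) = ρ_t(ρ_{t+1}(X))`, so by monotonicity
`ρ_t(X)` is a lower bound of the hedging costs `ρ_t(Y·V)` and is attained by the strategy
holding `ρ_{t+1}(X)` units of `v⁰ ≡ 1`. Conversely, for `V ≡ 1` every hedge `W` of `X`
dominates the hedge `ρ_{t+1}(X)`, so the least hedging cost is `ρ_t(ρ_{t+1}(X))`.
-/

open MeasureTheory Filter Set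

variable {Ω : Type*} {mΩ : MeasurableSpace Ω}

/-- `v` is a numéraire: essentially bounded, a.s. strictly positive, with `1/v`
essentially bounded. -/
def IsNumeraire (μ : Measure Ω) (v : Ω → ℝ) : Prop :=
  MemLp v ⊤ μ ∧ (∀ᵐ ω ∂μ, 0 < v ω) ∧ MemLp (fun ω => (v ω)⁻¹) ⊤ μ

/-- `ρ = (ρ_t)_{t ≤ T}` is a dynamic coherent risk measure: each `ρ_t` maps `L∞` into
`F_t`-measurable elements of `L∞`, and the whole family is represented by a single
nonempty convex set `𝒬` of `P`-absolutely continuous probability measures (identified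
with their densities) via `ρ_t(X) = esssup_{Q∈𝒬} E_Q[X|F_t]`; the essential supremum is
expressed through the Bayes formula `E_Q[X|F_t]·E[dQ/dP|F_t] = E[(dQ/dP)·X|F_t]`. -/
def IsDynCoherent (μ : Measure Ω) (ℱ : Filtration ℕ mΩ) (T : ℕ)
    (ρ : ℕ → (Ω → ℝ) → Ω → ℝ) : Prop :=
  ∃ 𝒬 : Set (Ω → ℝ),
    𝒬.Nonempty ∧ Convex ℝ 𝒬 ∧
    (∀ Z ∈ 𝒬, Integrable Z μ ∧ 0 ≤ᵐ[μ] Z ∧ ∫ ω, Z ω ∂μ = 1) ∧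
    (∀ t ≤ T, ∀ X : Ω → ℝ, MemLp X ⊤ μ →
      (StronglyMeasurable[ℱ t] (ρ t X) ∧ MemLp (ρ t X) ⊤ μ) ∧
      (∀ Z ∈ 𝒬,
        μ[fun ω => Z ω * X ω | ℱ t] ≤ᵐ[μ] fun ω => (μ[Z | ℱ t]) ω * ρ t X ω) ∧
      (∀ U : Ω → ℝ, StronglyMeasurable[ℱ t] U →
        (∀ Z ∈ 𝒬,
          μ[fun ω => Z ω * X ω | ℱ t] ≤ᵐ[μ] fun ω => (μ[Z | ℱ t]) ω * U ω) →
        ρ t X ≤ᵐ[μ] U))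

/-- The time-`t` acceptance set `A_t = {X ∈ L∞ : ρ_t(X) ≤ 0}`. -/
def acceptanceSet (μ : Measure Ω) (ρ : ℕ → (Ω → ℝ) → Ω → ℝ) (t : ℕ) :
    Set (Ω → ℝ) :=
  {X | MemLp X ⊤ μ ∧ ρ t X ≤ᵐ[μ] 0}

/-- `ρ` is predictably `V`-time-consistent: for all `X ∈ L∞` and `t < T`, `ρ_t(X)` is the
essential infimum of `{ρ_t(Y·V) : Y ∈ L∞(F_{t+1};ℝ^{d+1}), X − Y·V ∈ A_{t+1}}`. -/
def PredVTimeConsistent (μ : Measure Ω) (ℱ : Filtration ℕ mΩ) (T : ℕ) {d : ℕ}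
    (V : Fin (d+1) → Ω → ℝ) (ρ : ℕ → (Ω → ℝ) → Ω → ℝ) : Prop :=
  ∀ t < T, ∀ X : Ω → ℝ, MemLp X ⊤ μ →
    (∀ Y : Fin (d+1) → Ω → ℝ, (∀ i, MemLp (Y i) ⊤ μ) →
      (∀ i, StronglyMeasurable[ℱ (t+1)] (Y i)) →
      (fun ω => X ω - ∑ i, Y i ω * V i ω) ∈ acceptanceSet μ ρ (t+1) →
      ρ t X ≤ᵐ[μ] ρ t (fun ω => ∑ i, Y i ω * V i ω)) ∧
    (∀ L : Ω → ℝ,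
      (∀ Y : Fin (d+1) → Ω → ℝ, (∀ i, MemLp (Y i) ⊤ μ) →
        (∀ i, StronglyMeasurable[ℱ (t+1)] (Y i)) →
        (fun ω => X ω - ∑ i, Y i ω * V i ω) ∈ acceptanceSet μ ρ (t+1) →
        L ≤ᵐ[μ] ρ t (fun ω => ∑ i, Y i ω * V i ω)) →
      L ≤ᵐ[μ] ρ t X)

/-- `ρ` is strongly time-consistent: `ρ_t(X) = ρ_t(ρ_{t+1}(X))` for all `t ≤ T−1`. -/
def StronglyTimeConsistent (μ : Measure Ω) (T : ℕ)
    (ρ : ℕ → (Ω → ℝ) → Ω → ℝ) : Prop :=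
  ∀ t < T, ∀ X : Ω → ℝ, MemLp X ⊤ μ → ρ t X =ᵐ[μ] ρ t (ρ (t+1) X)


namespace IsDynCoherent

variable {μ : Measure Ω} {ℱ : Filtration ℕ mΩ} {T t : ℕ} {ρ : ℕ → (Ω → ℝ) → Ω → ℝ}
  {X X' W : Ω → ℝ}

theorem stronglyMeasurable (hρ : IsDynCoherent μ ℱ T ρ) (ht : t ≤ T) (hX : MemLp X ⊤ μ) :
    StronglyMeasurable[ℱ t] (ρ t X) :=
  let ⟨_, _, _, _, hrep⟩ := hρ
  (hrep t ht X hX).1.1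

theorem memLp (hρ : IsDynCoherent μ ℱ T ρ) (ht : t ≤ T) (hX : MemLp X ⊤ μ) :
    MemLp (ρ t X) ⊤ μ :=
  let ⟨_, _, _, _, hrep⟩ := hρ
  (hrep t ht X hX).1.2

theorem mono (hρ : IsDynCoherent μ ℱ T ρ) (ht : t ≤ T) (hX : MemLp X ⊤ μ)
    (hX' : MemLp X' ⊤ μ) (hle : X ≤ᵐ[μ] X') : ρ t X ≤ᵐ[μ] ρ t X' := by
  obtain ⟨𝒬, -, -, h𝒬, hrep⟩ := hρ
  obtain ⟨⟨hm', -⟩, hbound', -⟩ := hrep t ht X' hX'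
  refine (hrep t ht X hX).2.2 _ hm' fun Z hZQ => ?_
  obtain ⟨hZ, hZ_nonneg, -⟩ := h𝒬 Z hZQ
  have hZX : Z * X ≤ᵐ[μ] Z * X' := by
    filter_upwards [hZ_nonneg, hle] with ω h0 h1
    exact mul_le_mul_of_nonneg_left h1 h0
  exact (condExp_mono (hZ.mul_of_top_left hX) (hZ.mul_of_top_left hX') hZX).trans
    (hbound' Z hZQ)

theorem add_le (hρ : IsDynCoherent μ ℱ T ρ) (ht : t ≤ T) (hX : MemLp X ⊤ μ)
    (hX' : MemLp X' ⊤ μ) : ρ t (X + X') ≤ᵐ[μ] ρ t X + ρ t X' := by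
  obtain ⟨𝒬, -, -, h𝒬, hrep⟩ := hρ
  obtain ⟨⟨hm, -⟩, hbound, -⟩ := hrep t ht X hX
  obtain ⟨⟨hm', -⟩, hbound', -⟩ := hrep t ht X' hX'
  refine (hrep t ht _ (hX.add hX')).2.2 _ (hm.add hm') fun Z hZQ => ?_
  have hZ := (h𝒬 Z hZQ).1
  have hsplit : μ[Z * (X + X') | ℱ t] =ᵐ[μ] μ[Z * X | ℱ t] + μ[Z * X' | ℱ t] := by
    rw [mul_add]
    exact condExp_add (hZ.mul_of_top_left hX) (hZ.mul_of_top_left hX') _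
  filter_upwards [hsplit, hbound Z hZQ, hbound' Z hZQ] with ω h h₁ h₂
  refine h.trans_le ?_
  simp only [Pi.add_apply, mul_add]
  exact add_le_add h₁ h₂

theorem sub_le (hρ : IsDynCoherent μ ℱ T ρ) (ht : t ≤ T) (hX : MemLp X ⊤ μ)
    (hW : MemLp W ⊤ μ) (hWm : StronglyMeasurable[ℱ t] W) : ρ t (X - W) ≤ᵐ[μ] ρ t X - W := by
  obtain ⟨𝒬, -, -, h𝒬, hrep⟩ := hρ
  obtain ⟨⟨hm, -⟩, hbound, -⟩ := hrep t ht X hX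
  refine (hrep t ht _ (hX.sub hW)).2.2 _ (hm.sub hWm) fun Z hZQ => ?_
  have hZ := (h𝒬 Z hZQ).1
  have hsplit : μ[Z * (X - W) | ℱ t] =ᵐ[μ] μ[Z * X | ℱ t] - μ[Z * W | ℱ t] := by
    rw [mul_sub]
    exact condExp_sub (hZ.mul_of_top_left hX) (hZ.mul_of_top_left hW) _
  have hpull : μ[Z * W | ℱ t] =ᵐ[μ] μ[Z | ℱ t] * W :=
    condExp_mul_of_stronglyMeasurable_right hWm (hZ.mul_of_top_left hW) hZ
  filter_upwards [hsplit, hpull, hbound Z hZQ] with ω h hpull h₁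
  refine h.trans_le ?_
  simp only [Pi.sub_apply, Pi.mul_apply, hpull, mul_sub]
  exact sub_le_sub_right h₁ _

theorem le_sub_add (hρ : IsDynCoherent μ ℱ T ρ) (ht : t ≤ T) (hX : MemLp X ⊤ μ)
    (hW : MemLp W ⊤ μ) (hWm : StronglyMeasurable[ℱ t] W) : ρ t X ≤ᵐ[μ] ρ t (X - W) + W := by
  simpa only [sub_neg_eq_add, sub_add_cancel] using
    hρ.sub_le ht (hX.sub hW) hW.neg hWm.neg

theorem sub_mem_acceptanceSet (hρ : IsDynCoherent μ ℱ T ρ) (ht : t ≤ T) (hX : MemLp X ⊤ μ) :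
    X - ρ t X ∈ acceptanceSet μ ρ t := by
  refine ⟨hX.sub (hρ.memLp ht hX), ?_⟩
  simpa only [sub_self] using hρ.sub_le ht hX (hρ.memLp ht hX) (hρ.stronglyMeasurable ht hX)

theorem le_of_sub_mem_acceptanceSet (hρ : IsDynCoherent μ ℱ T ρ) (ht : t ≤ T)
    (hX' : MemLp X' ⊤ μ) (hacc : X - X' ∈ acceptanceSet μ ρ t) : ρ t X ≤ᵐ[μ] ρ t X' := by
  have h := hρ.add_le ht hX' hacc.1
  rw [add_sub_cancel] at h
  filter_upwards [h, hacc.2] with ω h h₀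
  simp only [Pi.add_apply, Pi.zero_apply] at h h₀
  linarith

theorem le_of_sub_mem_acceptanceSet_of_stronglyMeasurable (hρ : IsDynCoherent μ ℱ T ρ)
    (ht : t ≤ T) (hX : MemLp X ⊤ μ) (hW : MemLp W ⊤ μ) (hWm : StronglyMeasurable[ℱ t] W)
    (hacc : X - W ∈ acceptanceSet μ ρ t) : ρ t X ≤ᵐ[μ] W := by
  filter_upwards [hρ.le_sub_add ht hX hW hWm, hacc.2] with ω h h₀
  simp only [Pi.add_apply, Pi.zero_apply] at h h₀
  linarith

end IsDynCoherent

section TimeConsistency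

variable {μ : Measure Ω} {ℱ : Filtration ℕ mΩ} {T : ℕ} {ρ : ℕ → (Ω → ℝ) → Ω → ℝ}

theorem sum_single_mul_eq_of_eq_one {d : ℕ} {V : Fin (d+1) → Ω → ℝ} (hV0 : V 0 = fun _ => 1)
    (W : Ω → ℝ) (ω : Ω) : ∑ i, (Pi.single 0 W : Fin (d+1) → Ω → ℝ) i ω * V i ω = W ω := by
  rw [Fintype.sum_eq_single 0 fun i hi => by simp [hi]]
  simp [hV0]

theorem predVTimeConsistent_of_stronglyTimeConsistent (hρ : IsDynCoherent μ ℱ T ρ) {d : ℕ}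
    {V : Fin (d+1) → Ω → ℝ} (hV : ∀ i, MemLp (V i) ⊤ μ) (hV0 : V 0 = fun _ => 1)
    (hstc : StronglyTimeConsistent μ T ρ) : PredVTimeConsistent μ ℱ T V ρ := by
  intro t ht X hX
  have hR := hρ.memLp ht hX
  refine ⟨fun Y hY _ hacc => ?_, fun L hL => ?_⟩
  · have hYV : MemLp (fun ω => ∑ i, Y i ω * V i ω) ⊤ μ :=
      memLp_finsetSum _ fun i _ => (hV i).mul (hY i)
    have hle := hρ.mono ht.le hR (hρ.memLp ht hYV) (hρ.le_of_sub_mem_acceptanceSet ht hYV hacc)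
    filter_upwards [hstc t ht X hX, hstc t ht _ hYV, hle] with ω h₁ h₂ h
    rw [h₁, h₂]
    exact h
  · have hRm := hρ.stronglyMeasurable ht hX
    have hYR := hL (Pi.single 0 (ρ (t+1) X) : Fin (d+1) → Ω → ℝ)
      (fun i => by rw [Pi.single_apply]; split_ifs; exacts [hR, MemLp.zero])
      (fun i => by rw [Pi.single_apply]; split_ifs; exacts [hRm, stronglyMeasurable_zero])
    simp only [sum_single_mul_eq_of_eq_one hV0] at hYR
    filter_upwards [hYR (hρ.sub_mem_acceptanceSet ht hX), hstc t ht X hX] with ω h h₁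
    rw [h₁]
    exact h

theorem stronglyTimeConsistent_of_predVTimeConsistent_one (hρ : IsDynCoherent μ ℱ T ρ)
    (hpred : PredVTimeConsistent μ ℱ T (fun (_ : Fin 1) (_ : Ω) => (1 : ℝ)) ρ) :
    StronglyTimeConsistent μ T ρ := by
  intro t ht X hX
  have hR := hρ.memLp ht hX
  obtain ⟨hcost_le, hle_cost⟩ := hpred t ht X hX
  simp only [Nat.reduceAdd, mul_one, Fintype.sum_unique, Fin.default_eq_zero] at hcost_le hle_cost
  refine (hcost_le _ (fun _ => hR) (fun _ => hρ.stronglyMeasurable ht hX)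
    (hρ.sub_mem_acceptanceSet ht hX)).antisymm (hle_cost _ fun Y hY hYm hacc => ?_)
  exact hρ.mono ht.le hR (hY 0)
    (hρ.le_of_sub_mem_acceptanceSet_of_stronglyMeasurable ht hX (hY 0) (hYm 0) hacc)

end TimeConsistency

theorem strongTC_implies_predVTC_general
    (μ : Measure Ω) (ℱ : Filtration ℕ mΩ) (T d : ℕ)
    (ρ : ℕ → (Ω → ℝ) → Ω → ℝ)
    (hρ : IsDynCoherent μ ℱ T ρ)
    (V : Fin (d+1) → Ω → ℝ) (hV : ∀ i, IsNumeraire μ (V i))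
    (hV0 : V 0 = fun _ => 1) :
    (StronglyTimeConsistent μ T ρ → PredVTimeConsistent μ ℱ T V ρ) ∧
    (StronglyTimeConsistent μ T ρ ↔
      PredVTimeConsistent μ ℱ T (fun (_ : Fin 1) (_ : Ω) => (1 : ℝ)) ρ) :=
  ⟨predVTimeConsistent_of_stronglyTimeConsistent hρ (fun i => (hV i).1) hV0,
    predVTimeConsistent_of_stronglyTimeConsistent hρ (fun _ => memLp_top_const 1) rfl,
    stronglyTimeConsistent_of_predVTimeConsistent_one hρ⟩

/-- Strong time-consistency implies predictable `V`-time-consistency,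
and for `d = 0`, `V ≡ 1` the two notions coincide. -/
theorem strongTC_implies_predVTC
    (μ : Measure Ω) [IsProbabilityMeasure μ] (ℱ : Filtration ℕ mΩ) (T d : ℕ)
    (ρ : ℕ → (Ω → ℝ) → Ω → ℝ)
    (hρ : IsDynCoherent μ ℱ T ρ)
    (V : Fin (d+1) → Ω → ℝ) (hV : ∀ i, IsNumeraire μ (V i))
    (hV0 : V 0 = fun _ => 1) :
    (StronglyTimeConsistent μ T ρ → PredVTimeConsistent μ ℱ T V ρ) ∧
    (StronglyTimeConsistent μ T ρ ↔
      PredVTimeConsistent μ ℱ T (fun (_ : Fin 1) (_ : Ω) => (1 : ℝ)) ρ) :=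
  strongTC_implies_predVTC_general μ ℱ T d ρ hρ V hV hV0
end

section
/- Let ρ = (ρ_t) be a dynamic coherent risk measure with acceptance sets A_t and V numéraires with v^0 ≡ 1. For each X ∈ L∞ and t < T, the set S_t(X) := {ρ_t(Y·V) : Y ∈ L∞(Ω,F_{t+1},P;ℝ^{d+1}), X − Y·V ∈ A_{t+1}} is directed downwards: for any two elements ρ_t(Y·V), ρ_t(Z·V) of S_t(X) there is an element of S_t(X) equal to min(ρ_t(Y·V), ρ_t(Z·V)). -/
/-!
Statement 12: for a dynamic coherent risk measure `ρ` with acceptance sets `A_t` and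
numéraires `V` (with `v⁰ ≡ 1`), the set
`S_t(X) = {ρ_t(Y·V) : Y ∈ L∞(F_{t+1};ℝ^{d+1}), X − Y·V ∈ A_{t+1}}` is directed
downwards: any two of its elements admit an element of `S_t(X)` equal to their minimum.
-/

open MeasureTheory Filter Set

variable {Ω : Type*} {mΩ : MeasurableSpace Ω}

section Aux

variable {μ : Measure Ω} {ℱ : Filtration ℕ mΩ}

/-- An essentially bounded function admits an a.e. bound. -/
lemma memtop_bound {f : Ω → ℝ} (hf : MemLp f ⊤ μ) :
    ∃ C : ℝ, ∀ᵐ ω ∂μ, ‖f ω‖ ≤ C := by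
  refine ⟨(eLpNormEssSup f μ).toReal, ?_⟩
  have hlt : eLpNormEssSup f μ < ⊤ := by
    have := hf.2
    rwa [eLpNorm_exponent_top] at this
  filter_upwards [ae_le_eLpNormEssSup (f := f) (μ := μ)] with ω hω
  have h2 := ENNReal.toReal_mono hlt.ne hω
  simpa using h2

/-- Products of essentially bounded functions are essentially bounded. -/
lemma memtop_mul {f g : Ω → ℝ} (hf : MemLp f ⊤ μ) (hg : MemLp g ⊤ μ) :
    MemLp (fun ω => f ω * g ω) ⊤ μ := by
  obtain ⟨C, hC⟩ := memtop_bound hf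
  obtain ⟨D, hD⟩ := memtop_bound hg
  refine memLp_top_of_bound (hf.aestronglyMeasurable.mul hg.aestronglyMeasurable) (C * D) ?_
  filter_upwards [hC, hD] with ω h1 h2
  calc ‖f ω * g ω‖ ≤ ‖f ω‖ * ‖g ω‖ := norm_mul_le _ _
    _ ≤ C * D :=
      mul_le_mul h1 h2 (norm_nonneg _) (le_trans (norm_nonneg _) h1)

/-- An integrable function times an essentially bounded one is integrable. -/
lemma int_mul {Z X : Ω → ℝ} (hZ : Integrable Z μ) (hX : MemLp X ⊤ μ) :
    Integrable (fun ω => Z ω * X ω) μ := by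
  obtain ⟨C, hC⟩ := memtop_bound hX
  exact (hZ.bdd_mul hX.aestronglyMeasurable hC).congr
    (Eventually.of_forall fun ω => mul_comm _ _)

/-- Conditional expectation splits across an `ℱ s`-measurable partition. -/
lemma cond_split [IsProbabilityMeasure μ] {s : ℕ} {A : Set Ω}
    (hA : MeasurableSet[ℱ s] A) {Z X1 X2 : Ω → ℝ}
    (h1 : Integrable (fun ω => Z ω * X1 ω) μ)
    (h2 : Integrable (fun ω => Z ω * X2 ω) μ) :
    μ[fun ω => Z ω * (A.indicator X1 ω + Aᶜ.indicator X2 ω) | ℱ s] =ᵐ[μ]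
      fun ω => A.indicator (μ[fun ω' => Z ω' * X1 ω' | ℱ s]) ω
        + Aᶜ.indicator (μ[fun ω' => Z ω' * X2 ω' | ℱ s]) ω := by
  have hA0 : MeasurableSet A := ℱ.le s A hA
  have key : (fun ω => Z ω * (A.indicator X1 ω + Aᶜ.indicator X2 ω))
      = (A.indicator (fun ω' => Z ω' * X1 ω')
          + Aᶜ.indicator (fun ω' => Z ω' * X2 ω')) := by
    funext ω
    by_cases h : ω ∈ A <;>
      simp [Set.indicator_apply, h, mul_add]
  rw [key]
  refine (condExp_add (h1.indicator hA0) (h2.indicator hA0.compl) (ℱ s)).trans ?_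
  filter_upwards [condExp_indicator h1 hA, condExp_indicator h2 hA.compl] with ω e1 e2
  simp only [Pi.add_apply, e1, e2]

/-- Locality of `ρ_s` under the dual representation. -/
lemma rho_local [IsProbabilityMeasure μ] {s : ℕ} {ρs : (Ω → ℝ) → Ω → ℝ}
    {𝒬 : Set (Ω → ℝ)} (h𝒬 : ∀ Z ∈ 𝒬, Integrable Z μ)
    (hrep : ∀ X : Ω → ℝ, MemLp X ⊤ μ →
      (StronglyMeasurable[ℱ s] (ρs X) ∧ MemLp (ρs X) ⊤ μ) ∧
      (∀ Z ∈ 𝒬,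
        μ[fun ω => Z ω * X ω | ℱ s] ≤ᵐ[μ] fun ω => (μ[Z | ℱ s]) ω * ρs X ω) ∧
      (∀ U : Ω → ℝ, StronglyMeasurable[ℱ s] U →
        (∀ Z ∈ 𝒬,
          μ[fun ω => Z ω * X ω | ℱ s] ≤ᵐ[μ] fun ω => (μ[Z | ℱ s]) ω * U ω) →
        ρs X ≤ᵐ[μ] U))
    {A : Set Ω} (hA : MeasurableSet[ℱ s] A)
    {X1 X2 : Ω → ℝ} (h1 : MemLp X1 ⊤ μ) (h2 : MemLp X2 ⊤ μ) :
    ρs (fun ω => A.indicator X1 ω + Aᶜ.indicator X2 ω) =ᵐ[μ]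
      fun ω => A.indicator (ρs X1) ω + Aᶜ.indicator (ρs X2) ω := by
  have hA0 : MeasurableSet A := ℱ.le s A hA
  set g : Ω → ℝ := fun ω => A.indicator X1 ω + Aᶜ.indicator X2 ω with hg_def
  have hg : MemLp g ⊤ μ := (h1.indicator hA0).add (h2.indicator hA0.compl)
  obtain ⟨⟨m1, _⟩, i1, min1⟩ := hrep X1 h1
  obtain ⟨⟨m2, _⟩, i2, min2⟩ := hrep X2 h2
  obtain ⟨⟨mg, _⟩, ig, ming⟩ := hrep g hg
  -- upper bound: ρ g ≤ 1_A ρ X1 + 1_{Aᶜ} ρ X2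
  have hub : ρs g ≤ᵐ[μ] fun ω => A.indicator (ρs X1) ω + Aᶜ.indicator (ρs X2) ω := by
    refine ming _ ((m1.indicator hA).add (m2.indicator hA.compl)) ?_
    intro Z hZ
    have hc := cond_split hA (int_mul (h𝒬 Z hZ) h1) (int_mul (h𝒬 Z hZ) h2)
    refine hc.le.trans ?_
    filter_upwards [i1 Z hZ, i2 Z hZ] with ω w1 w2
    by_cases h : ω ∈ A
    · simpa [Set.indicator_apply, h] using w1
    · simpa [Set.indicator_apply, h] using w2
  -- on A, ρ X1 ≤ ρ g
  have e1 : ρs X1 ≤ᵐ[μ] fun ω => A.indicator (ρs g) ω + Aᶜ.indicator (ρs X1) ω := by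
    refine min1 _ ((mg.indicator hA).add (m1.indicator hA.compl)) ?_
    intro Z hZ
    have hc := cond_split hA (int_mul (h𝒬 Z hZ) hg) (int_mul (h𝒬 Z hZ) h1)
    have harg : (fun ω => Z ω * (A.indicator g ω + Aᶜ.indicator X1 ω))
        = fun ω => Z ω * X1 ω := by
      funext ω
      by_cases h : ω ∈ A <;> simp [hg_def, Set.indicator_apply, h]
    rw [harg] at hc
    refine hc.le.trans ?_
    filter_upwards [ig Z hZ, i1 Z hZ] with ω wg w1
    by_cases h : ω ∈ A
    · simpa [Set.indicator_apply, h] using wg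
    · simpa [Set.indicator_apply, h] using w1
  -- on Aᶜ, ρ X2 ≤ ρ g
  have e2 : ρs X2 ≤ᵐ[μ] fun ω => A.indicator (ρs X2) ω + Aᶜ.indicator (ρs g) ω := by
    refine min2 _ ((m2.indicator hA).add (mg.indicator hA.compl)) ?_
    intro Z hZ
    have hc := cond_split hA (int_mul (h𝒬 Z hZ) h2) (int_mul (h𝒬 Z hZ) hg)
    have harg : (fun ω => Z ω * (A.indicator X2 ω + Aᶜ.indicator g ω))
        = fun ω => Z ω * X2 ω := by
      funext ω
      by_cases h : ω ∈ A <;> simp [hg_def, Set.indicator_apply, h]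
    rw [harg] at hc
    refine hc.le.trans ?_
    filter_upwards [i2 Z hZ, ig Z hZ] with ω w2 wg
    by_cases h : ω ∈ A
    · simpa [Set.indicator_apply, h] using w2
    · simpa [Set.indicator_apply, h] using wg
  have hlb : (fun ω => A.indicator (ρs X1) ω + Aᶜ.indicator (ρs X2) ω) ≤ᵐ[μ] ρs g := by
    filter_upwards [e1, e2] with ω w1 w2
    by_cases h : ω ∈ A
    · simpa [Set.indicator_apply, h] using w1
    · simpa [Set.indicator_apply, h] using w2
  exact hub.antisymm hlb

end Aux

/-- `S_t(X)` is directed downwards. -/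
theorem St_directed_downwards
    (μ : Measure Ω) [IsProbabilityMeasure μ] (ℱ : Filtration ℕ mΩ) (T d : ℕ)
    (ρ : ℕ → (Ω → ℝ) → Ω → ℝ)
    (hρ : IsDynCoherent μ ℱ T ρ)
    (V : Fin (d+1) → Ω → ℝ) (hV : ∀ i, IsNumeraire μ (V i))
    (hV0 : V 0 = fun _ => 1)
    (t : ℕ) (ht : t < T) (X : Ω → ℝ) (hX : MemLp X ⊤ μ)
    (Y Z : Fin (d+1) → Ω → ℝ)
    (hY : ∀ i, MemLp (Y i) ⊤ μ) (hYmeas : ∀ i, StronglyMeasurable[ℱ (t+1)] (Y i))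
    (hYacc : (fun ω => X ω - ∑ i, Y i ω * V i ω) ∈ acceptanceSet μ ρ (t+1))
    (hZ : ∀ i, MemLp (Z i) ⊤ μ) (hZmeas : ∀ i, StronglyMeasurable[ℱ (t+1)] (Z i))
    (hZacc : (fun ω => X ω - ∑ i, Z i ω * V i ω) ∈ acceptanceSet μ ρ (t+1)) :
    ∃ W : Fin (d+1) → Ω → ℝ,
      (∀ i, MemLp (W i) ⊤ μ) ∧ (∀ i, StronglyMeasurable[ℱ (t+1)] (W i)) ∧
      (fun ω => X ω - ∑ i, W i ω * V i ω) ∈ acceptanceSet μ ρ (t+1) ∧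
      ρ t (fun ω => ∑ i, W i ω * V i ω) =ᵐ[μ]
        fun ω => min (ρ t (fun ω' => ∑ i, Y i ω' * V i ω') ω)
          (ρ t (fun ω' => ∑ i, Z i ω' * V i ω') ω) := by
  classical
  obtain ⟨𝒬, -, -, h𝒬, hrep⟩ := hρ
  have h𝒬' : ∀ Z' ∈ 𝒬, Integrable Z' μ := fun Z' hZ' => (h𝒬 Z' hZ').1
  have hf : MemLp (fun ω => ∑ i, Y i ω * V i ω) ⊤ μ :=
    memLp_finset_sum Finset.univ fun i _ => memtop_mul (hY i) (hV i).1
  have hg : MemLp (fun ω => ∑ i, Z i ω * V i ω) ⊤ μ :=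
    memLp_finset_sum Finset.univ fun i _ => memtop_mul (hZ i) (hV i).1
  have mf : StronglyMeasurable[ℱ t] (ρ t fun ω => ∑ i, Y i ω * V i ω) :=
    (hrep t ht.le _ hf).1.1
  have mg : StronglyMeasurable[ℱ t] (ρ t fun ω => ∑ i, Z i ω * V i ω) :=
    (hrep t ht.le _ hg).1.1
  set A : Set Ω := {ω | ρ t (fun ω' => ∑ i, Y i ω' * V i ω') ω
      ≤ ρ t (fun ω' => ∑ i, Z i ω' * V i ω') ω} with hA_def
  have hA : MeasurableSet[ℱ t] A := mf.measurableSet_le mg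
  have hA1 : MeasurableSet[ℱ (t + 1)] A := ℱ.mono (Nat.le_succ t) _ hA
  have hA0 : MeasurableSet A := ℱ.le t _ hA
  refine ⟨fun i ω => A.indicator (Y i) ω + Aᶜ.indicator (Z i) ω,
    fun i => ((hY i).indicator hA0).add ((hZ i).indicator hA0.compl),
    fun i => ((hYmeas i).indicator hA1).add ((hZmeas i).indicator hA1.compl), ?_, ?_⟩
  · -- acceptance
    have hkey : (fun ω => X ω - ∑ i, (A.indicator (Y i) ω + Aᶜ.indicator (Z i) ω) * V i ω)
        = fun ω => A.indicator (fun ω' => X ω' - ∑ i, Y i ω' * V i ω') ω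
            + Aᶜ.indicator (fun ω' => X ω' - ∑ i, Z i ω' * V i ω') ω := by
      funext ω
      by_cases h : ω ∈ A <;> simp [Set.indicator_apply, h]
    have hXf : MemLp (fun ω => X ω - ∑ i, Y i ω * V i ω) ⊤ μ := hX.sub hf
    have hXg : MemLp (fun ω => X ω - ∑ i, Z i ω * V i ω) ⊤ μ := hX.sub hg
    have hloc1 := rho_local (ρs := ρ (t + 1)) h𝒬'
      (fun X' hX' => hrep (t + 1) ht X' hX') hA1 hXf hXg
    show (fun ω => X ω - ∑ i, (A.indicator (Y i) ω + Aᶜ.indicator (Z i) ω) * V i ω)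
        ∈ acceptanceSet μ ρ (t + 1)
    rw [acceptanceSet, Set.mem_setOf_eq, hkey]
    refine ⟨(hXf.indicator hA0).add (hXg.indicator hA0.compl), ?_⟩
    refine hloc1.le.trans ?_
    filter_upwards [hYacc.2, hZacc.2] with ω w1 w2
    by_cases h : ω ∈ A
    · simpa [Set.indicator_apply, h] using w1
    · simpa [Set.indicator_apply, h] using w2
  · -- minimum
    have hsum : (fun ω => ∑ i, (A.indicator (Y i) ω + Aᶜ.indicator (Z i) ω) * V i ω)
        = fun ω => A.indicator (fun ω' => ∑ i, Y i ω' * V i ω') ω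
            + Aᶜ.indicator (fun ω' => ∑ i, Z i ω' * V i ω') ω := by
      funext ω
      by_cases h : ω ∈ A <;> simp [Set.indicator_apply, h]
    show ρ t (fun ω => ∑ i, (A.indicator (Y i) ω + Aᶜ.indicator (Z i) ω) * V i ω) =ᵐ[μ]
      fun ω => min (ρ t (fun ω' => ∑ i, Y i ω' * V i ω') ω)
        (ρ t (fun ω' => ∑ i, Z i ω' * V i ω') ω)
    rw [hsum]
    have hloc2 := rho_local (ρs := ρ t) h𝒬' (fun X' hX' => hrep t ht.le X' hX') hA hf hg
    refine hloc2.trans (Eventually.of_forall fun ω => ?_)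
    by_cases h : ω ∈ A
    · have h' : ρ t (fun ω' => ∑ i, Y i ω' * V i ω') ω
          ≤ ρ t (fun ω' => ∑ i, Z i ω' * V i ω') ω := h
      simp [Set.indicator_apply, h, min_eq_left h']
    · have h' : ¬ ρ t (fun ω' => ∑ i, Y i ω' * V i ω') ω
          ≤ ρ t (fun ω' => ∑ i, Z i ω' * V i ω') ω := h
      simp [Set.indicator_apply, h, min_eq_right (le_of_not_ge h')]
end

section
/- The convex hull of a predictable pre-image is an F_s-cone: (1) if Z ∈ conv M_s(D) and g is a bounded nonnegative F_s-measurable random variable, then gZ ∈ conv M_s(D); (2) if Z¹, Z² ∈ conv M_s(D), then Z¹ + Z² ∈ conv M_s(D). -/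
/-!
Multiplying by a bounded nonnegative `F_s`-measurable `g` maps `M_s(D)` into itself, since `g`
pulls out of `E[· | F_{s+1}]` and is absorbed into the factor `α`. This multiplication is
linear, so it also preserves the convex hull. With `g = 2` the hull is closed under doubling,
and `Z¹ + Z² = 2 • (Z¹ / 2 + Z² / 2)`.
-/

open MeasureTheory Filter Set

variable {Ω : Type*} {mΩ : MeasurableSpace Ω}

/-- The predictable pre-image `M_s(D)` of `D` at time `s`. -/
def predPre (μ : Measure Ω) (ℱ : Filtration ℕ mΩ) {d : ℕ} (s : ℕ)
    (D : Set (Fin (d+1) → Ω → ℝ)) : Set (Fin (d+1) → Ω → ℝ) :=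
  {Z | (∀ i, Integrable (Z i) μ) ∧ ∃ α : Ω → ℝ, ∃ Z' ∈ D,
    Measurable[ℱ s] α ∧ 0 ≤ᵐ[μ] α ∧
    (∀ i, Integrable (fun ω => α ω * Z' i ω) μ) ∧
    (∀ i, μ[Z i | ℱ (s+1)] =ᵐ[μ] fun ω => α ω * (μ[Z' i | ℱ (s+1)]) ω)}

theorem LinearMap.mapsTo_convexHull {𝕜 E F : Type*} [Semiring 𝕜] [PartialOrder 𝕜]
    [AddCommMonoid E] [Module 𝕜 E] [AddCommMonoid F] [Module 𝕜 F] (f : E →ₗ[𝕜] F)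
    {s : Set E} {t : Set F} (h : MapsTo f s t) :
    MapsTo f (convexHull 𝕜 s) (convexHull 𝕜 t) := by
  intro x hx
  have hfx : f x ∈ convexHull 𝕜 (f '' s) := f.image_convexHull s ▸ mem_image_of_mem f hx
  exact convexHull_mono h.image_subset hfx

theorem add_mem_convexHull_of_two_smul_mem {𝕜 E : Type*} [Field 𝕜] [LinearOrder 𝕜]
    [IsStrictOrderedRing 𝕜] [AddCommMonoid E] [Module 𝕜 E] {s : Set E}
    (hs : ∀ x ∈ s, (2 : 𝕜) • x ∈ s) {x y : E} (hx : x ∈ convexHull 𝕜 s)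
    (hy : y ∈ convexHull 𝕜 s) : x + y ∈ convexHull 𝕜 s := by
  have hmid : (2⁻¹ : 𝕜) • x + (2⁻¹ : 𝕜) • y ∈ convexHull 𝕜 s :=
    convex_convexHull 𝕜 s hx hy (by positivity) (by positivity) (by ring)
  have h2 := (LinearMap.lsmul 𝕜 E (2 : 𝕜)).mapsTo_convexHull hs hmid
  rwa [LinearMap.lsmul_apply, smul_add, smul_smul, smul_smul, mul_inv_cancel₀ two_ne_zero,
    one_smul, one_smul] at h2

theorem smul_mem_predPre {μ : Measure Ω} {ℱ : Filtration ℕ mΩ} {d s : ℕ}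
    {D : Set (Fin (d+1) → Ω → ℝ)} {Z : Fin (d+1) → Ω → ℝ} (hZ : Z ∈ predPre μ ℱ s D)
    {g : Ω → ℝ} (hg_meas : Measurable[ℱ s] g) (hg_nonneg : 0 ≤ᵐ[μ] g) (hg_bdd : MemLp g ⊤ μ) :
    g • Z ∈ predPre μ ℱ s D := by
  obtain ⟨hZ_int, α, Z', hZ'D, hα_meas, hα_nonneg, hαZ'_int, hα_condExp⟩ := hZ
  have hgZ_int (i : Fin (d+1)) : Integrable (g * Z i) μ := (hZ_int i).mul_of_top_right hg_bdd
  have hg_sm : StronglyMeasurable[ℱ (s+1)] g :=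
    hg_meas.stronglyMeasurable.mono (ℱ.mono s.le_succ)
  refine ⟨hgZ_int, g * α, Z', hZ'D, hg_meas.mul hα_meas, ?_, fun i => ?_, fun i => ?_⟩
  · filter_upwards [hg_nonneg, hα_nonneg] with ω hgω hαω using mul_nonneg hgω hαω
  · simpa only [Pi.mul_def, mul_assoc] using (hαZ'_int i).mul_of_top_right hg_bdd
  · filter_upwards [condExp_mul_of_stronglyMeasurable_left hg_sm (hgZ_int i) (hZ_int i),
      hα_condExp i] with ω hω hαω
    simp only [Pi.smul_apply, smul_eq_mul, Pi.mul_apply] at hω ⊢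
    rw [hω, hαω, mul_assoc]

theorem convexHull_predPre_smul_add_general
    (μ : Measure Ω) (ℱ : Filtration ℕ mΩ) (d s : ℕ)
    (D : Set (Fin (d+1) → Ω → ℝ)) :
    (∀ Z ∈ convexHull ℝ (predPre μ ℱ s D), ∀ g : Ω → ℝ,
      Measurable[ℱ s] g → 0 ≤ᵐ[μ] g → MemLp g ⊤ μ →
      (fun i ω => g ω * Z i ω) ∈ convexHull ℝ (predPre μ ℱ s D)) ∧
    (∀ Z₁ ∈ convexHull ℝ (predPre μ ℱ s D), ∀ Z₂ ∈ convexHull ℝ (predPre μ ℱ s D),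
      Z₁ + Z₂ ∈ convexHull ℝ (predPre μ ℱ s D)) := by
  refine ⟨fun Z hZ g hg_meas hg_nonneg hg_bdd => ?_, fun Z₁ hZ₁ Z₂ hZ₂ => ?_⟩
  · exact (DistribSMul.toLinearMap ℝ (Fin (d+1) → Ω → ℝ) g).mapsTo_convexHull
      (fun W hW => smul_mem_predPre hW hg_meas hg_nonneg hg_bdd) hZ
  · refine add_mem_convexHull_of_two_smul_mem (fun Z hZ => ?_) hZ₁ hZ₂
    exact smul_mem_predPre (g := fun _ => 2) hZ measurable_const
      (ae_of_all _ fun _ => zero_le_two) (memLp_top_const 2)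

/-- (1) If `Z ∈ conv M_s(D)` and `g` is a bounded nonnegative
`F_s`-measurable random variable, then `gZ ∈ conv M_s(D)`.
(2) If `Z¹, Z² ∈ conv M_s(D)`, then `Z¹ + Z² ∈ conv M_s(D)`. -/
theorem convexHull_predPre_smul_add
    (μ : Measure Ω) [IsProbabilityMeasure μ] (ℱ : Filtration ℕ mΩ) (d s : ℕ)
    (D : Set (Fin (d+1) → Ω → ℝ))
    (hD : ∀ Z ∈ D, ∀ i, Integrable (Z i) μ ∧ 0 ≤ᵐ[μ] Z i) :
    (∀ Z ∈ convexHull ℝ (predPre μ ℱ s D), ∀ g : Ω → ℝ,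
      Measurable[ℱ s] g → 0 ≤ᵐ[μ] g → MemLp g ⊤ μ →
      (fun i ω => g ω * Z i ω) ∈ convexHull ℝ (predPre μ ℱ s D)) ∧
    (∀ Z₁ ∈ convexHull ℝ (predPre μ ℱ s D), ∀ Z₂ ∈ convexHull ℝ (predPre μ ℱ s D),
      Z₁ + Z₂ ∈ convexHull ℝ (predPre μ ℱ s D)) :=
  convexHull_predPre_smul_add_general μ ℱ d s D
end

section
/- On the four-point filtered space with Ω = {1,2,3,4}, F_0 trivial, F_1 = σ({1,2},{3,4}), F_2 = 2^Ω, P({1}) = 1/100, P({2}) = P({3}) = 9/100, P({4}) = 81/100, let AVaR_t(X) = esssup_{Q∈Q_λ} E_Q[X|F_t] with λ = 1/50 and Q_λ = {probability measures Q ≪ P : dQ/dP ≤ 50}. Let X⁰ = 1_{{1}} − 1_{{2,3,4}}. Then AVaR_0(X⁰) = 0, AVaR_1(X⁰) = 1_{{1,2}} − 1_{{3,4}}, and AVaR_0(AVaR_1(X⁰)) = 1 > 0 = AVaR_0(X⁰); in particular (AVaR_0, AVaR_1) is not strongly time-consistent (AVaR_0 ≠ AVaR_0 ∘ AVaR_1).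 -/
/-!
Statement 16: Average Value at Risk on the four-point space `Ω = {1,2,3,4}` (represented
here by `Fin 4`, with point `i+1` represented by `i`), with `F_0` trivial,
`F_1 = σ({1,2},{3,4})`, `F_2 = 2^Ω`, `P = (1/100, 9/100, 9/100, 81/100)` and `λ = 1/50`,
is not strongly time-consistent: for `X⁰ = 1_{{1}} − 1_{{2,3,4}}` one has
`AVaR_0(X⁰) = 0`, `AVaR_1(X⁰) = 1_{{1,2}} − 1_{{3,4}}` and
`AVaR_0(AVaR_1(X⁰)) = 1 > 0 = AVaR_0(X⁰)`.

Probability measures `Q ≪ P` are identified with the quadruples `q = (q_1,…,q_4)` of their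
masses; the representing set is `Q_λ = {q : q ≥ 0, ∑ q = 1, q_i ≤ 50 p_i}`, `AVaR_0` is the
supremum of `E_Q[X]` over `Q_λ`, and `AVaR_1(X)(ω)` is, on each atom `A` of `F_1`, the
supremum of `E_Q[X|A]` over the `Q ∈ Q_λ` charging `A` (the essential supremum of the
conditional expectations). -/

open Finset

/-- The reference probabilities `P = (1/100, 9/100, 9/100, 81/100)`. -/
noncomputable def pRef : Fin 4 → ℝ := ![1/100, 9/100, 9/100, 81/100]

/-- The representing set `Q_λ`, `λ = 1/50`: densities bounded by `1/λ = 50`. -/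
def Qlam : Set (Fin 4 → ℝ) :=
  {q | (∀ i, 0 ≤ q i) ∧ (∑ i, q i) = 1 ∧ ∀ i, q i ≤ 50 * pRef i}

/-- The time-1 atom containing `ω`: `{1,2}` or `{3,4}`. -/
def atom1 (ω : Fin 4) : Finset (Fin 4) := if (ω : ℕ) < 2 then {0, 1} else {2, 3}

/-- `AVaR_0(X) = sup_{Q ∈ Q_λ} E_Q[X]`. -/
noncomputable def AVaR0 (X : Fin 4 → ℝ) : ℝ :=
  sSup ((fun q => ∑ i, q i * X i) '' Qlam)

/-- `AVaR_1(X) = esssup_{Q ∈ Q_λ} E_Q[X|F_1]`: on each time-1 atom, the supremum of the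
conditional expectations under the measures in `Q_λ` charging that atom. -/
noncomputable def AVaR1 (X : Fin 4 → ℝ) : Fin 4 → ℝ := fun ω =>
  sSup ((fun q => (∑ i ∈ atom1 ω, q i * X i) / ∑ i ∈ atom1 ω, q i) ''
    {q ∈ Qlam | 0 < ∑ i ∈ atom1 ω, q i})

/-- `X⁰ = 1_{{1}} − 1_{{2,3,4}}`. -/
noncomputable def X0 : Fin 4 → ℝ := fun i => if i = 0 then 1 else -1

lemma memA : (![1/2,1/2,0,0] : Fin 4 → ℝ) ∈ Qlam := by
  refine ⟨fun i => ?_, ?_, fun i => ?_⟩ <;> first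
    | (fin_cases i <;> norm_num [pRef])
    | (simp [Fin.sum_univ_four]; norm_num)

lemma memB : (![1/2,0,0,1/2] : Fin 4 → ℝ) ∈ Qlam := by
  refine ⟨fun i => ?_, ?_, fun i => ?_⟩ <;> first
    | (fin_cases i <;> norm_num [pRef])
    | (simp [Fin.sum_univ_four]; norm_num)

lemma memC : (![0,0,1/2,1/2] : Fin 4 → ℝ) ∈ Qlam := by
  refine ⟨fun i => ?_, ?_, fun i => ?_⟩ <;> first
    | (fin_cases i <;> norm_num [pRef])
    | (simp [Fin.sum_univ_four]; norm_num)

lemma avar0_x0 : AVaR0 X0 = 0 := by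
  apply IsGreatest.csSup_eq
  constructor
  · exact ⟨![1/2,1/2,0,0], memA, by norm_num [Fin.sum_univ_four, X0, Matrix.cons_val_two, Matrix.cons_val_three, Matrix.vecHead, Matrix.vecTail]⟩
  · rintro y ⟨q, ⟨hpos, hsum, hle⟩, rfl⟩
    have h0 := hle 0
    have h1 := hpos 1
    have h2 := hpos 2
    have h3 := hpos 3
    simp [Fin.sum_univ_four] at hsum
    simp [Fin.sum_univ_four, X0, pRef] at h0 ⊢
    linarith

lemma atom_lt (ω : Fin 4) (h : (ω:ℕ) < 2) : atom1 ω = {0,1} := by simp [atom1, h]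
lemma atom_ge (ω : Fin 4) (h : ¬ (ω:ℕ) < 2) : atom1 ω = {2,3} := by simp [atom1, h]

lemma avar1_lt (ω : Fin 4) (h : (ω:ℕ) < 2) : AVaR1 X0 ω = 1 := by
  unfold AVaR1
  rw [atom_lt ω h]
  apply IsGreatest.csSup_eq
  constructor
  · refine ⟨![1/2,0,0,1/2], ⟨memB, ?_⟩, ?_⟩ <;>
      norm_num [Finset.sum_pair (show (0:Fin 4) ≠ 1 by decide), X0]
  · rintro y ⟨q, ⟨⟨hpos, _, _⟩, hq⟩, rfl⟩
    simp only [Finset.sum_pair (show (0:Fin 4) ≠ 1 by decide)] at *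
    rw [div_le_one hq]
    have := hpos 1
    simp [X0]
    linarith

lemma avar1_ge (ω : Fin 4) (h : ¬ (ω:ℕ) < 2) : AVaR1 X0 ω = -1 := by
  unfold AVaR1
  rw [atom_ge ω h]
  apply IsGreatest.csSup_eq
  constructor
  · refine ⟨![0,0,1/2,1/2], ⟨memC, ?_⟩, ?_⟩ <;>
      norm_num [Finset.sum_pair (show (2:Fin 4) ≠ 3 by decide), X0, Matrix.cons_val_two, Matrix.cons_val_three, Matrix.vecHead, Matrix.vecTail,
        if_neg (show (2:Fin 4) ≠ 0 by decide), if_neg (show (3:Fin 4) ≠ 0 by decide)]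
  · rintro y ⟨q, ⟨⟨hpos, _, _⟩, hq⟩, rfl⟩
    simp only [Finset.sum_pair (show (2:Fin 4) ≠ 3 by decide)] at *
    simp only [X0, if_neg (show (2:Fin 4) ≠ 0 by decide), if_neg (show (3:Fin 4) ≠ 0 by decide)]
    rw [div_le_iff₀ hq]
    linarith

lemma avar1_x0 : AVaR1 X0 = (fun ω : Fin 4 => if (ω : ℕ) < 2 then (1 : ℝ) else -1) := by
  funext ω
  by_cases h : (ω:ℕ) < 2
  · simp [h, avar1_lt ω h]
  · simp [h, avar1_ge ω h]

lemma avar0_avar1 : AVaR0 (AVaR1 X0) = 1 := by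
  rw [avar1_x0]
  apply IsGreatest.csSup_eq
  constructor
  · exact ⟨![1/2,1/2,0,0], memA, by norm_num [Fin.sum_univ_four, Matrix.cons_val_two, Matrix.cons_val_three, Matrix.vecHead, Matrix.vecTail]⟩
  · rintro y ⟨q, ⟨hpos, hsum, _⟩, rfl⟩
    have h2 := hpos 2
    have h3 := hpos 3
    simp only [Fin.sum_univ_four,
      if_pos (show ((0:Fin 4):ℕ) < 2 by decide), if_pos (show ((1:Fin 4):ℕ) < 2 by decide),
      if_neg (show ¬((2:Fin 4):ℕ) < 2 by decide), if_neg (show ¬((3:Fin 4):ℕ) < 2 by decide)]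
      at hsum ⊢
    linarith [mul_one (q 0), mul_one (q 1)]

/-- `AVaR_0(X⁰) = 0`, `AVaR_1(X⁰) = 1_{{1,2}} − 1_{{3,4}}`,
`AVaR_0(AVaR_1(X⁰)) = 1 > 0 = AVaR_0(X⁰)`; in particular `(AVaR_0, AVaR_1)` is not
strongly time-consistent. -/
theorem avar_not_strongly_time_consistent :
    AVaR0 X0 = 0 ∧
    AVaR1 X0 = (fun ω : Fin 4 => if (ω : ℕ) < 2 then (1 : ℝ) else -1) ∧
    AVaR0 (AVaR1 X0) = 1 ∧
    (1 : ℝ) > 0 ∧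
    AVaR0 (AVaR1 X0) ≠ AVaR0 X0 ∧
    ¬ (∀ X : Fin 4 → ℝ, AVaR0 (AVaR1 X) = AVaR0 X) := by
  refine ⟨avar0_x0, avar1_x0, avar0_avar1, one_pos, ?_, ?_⟩
  · rw [avar0_x0, avar0_avar1]; norm_num
  · intro h
    have := h X0
    rw [avar0_x0, avar0_avar1] at this
    norm_num at this
end

section
/- On the four-point filtered space with Ω = {1,2,3,4}, F_0 trivial, F_1 = σ({1,2},{3,4}), F_2 = 2^Ω, P = (1/100, 9/100, 9/100, 81/100), and λ = 1/50, the representing set Q_λ = {Q ≪ P : dQ/dP ≤ 50} is not m-stable: for Q¹ = (1/2, 1/2, 0, 0) ∈ Q_λ and Q² = (1/2, 0, 1/2, 0) ∈ Q_λ, the time-1 pasting Q̃ with dQ̃/dP = (E[dQ¹/dP | F_1] / E[dQ²/dP | F_1]) · dQ²/dP equals the point mass (1,0,0,0), which satisfies Q̃({1}) = 1 > 1/2 and hence Q̃ ∉ Q_λ. -/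
/-!
On the atom `{1,2}` the pasting rescales `Q²` by `Q¹({1,2}) / Q²({1,2}) = 2`, and on `{3,4}` it
vanishes because `Q¹({3,4}) = 0`; so all mass lands on the point `1`. There `Q_λ` only allows
`50 · P({1}) = 1/2`, whereas every other point allows at least `9/2`, which is why `Q¹` and `Q²`,
whose masses are all at most `1/2`, do lie in `Q_λ`.
-/

open Finset

/-- `Q¹ = (1/2, 1/2, 0, 0)`. -/
noncomputable def Q1 : Fin 4 → ℝ := ![1/2, 1/2, 0, 0]

/-- `Q² = (1/2, 0, 1/2, 0)`. -/
noncomputable def Q2 : Fin 4 → ℝ := ![1/2, 0, 1/2, 0]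

/-- The time-1 pasting `Q̃` of `Q¹` and `Q²`:
`dQ̃/dP = (E[dQ¹/dP|F_1]/E[dQ²/dP|F_1])·dQ²/dP`, written on the time-1 atoms as
`Q̃(ω) = (Q¹(A_ω)/Q²(A_ω))·Q²(ω)`. -/
noncomputable def Qpaste : Fin 4 → ℝ := fun ω =>
  ((∑ i ∈ atom1 ω, Q1 i) / (∑ i ∈ atom1 ω, Q2 i)) * Q2 ω

lemma half_le_fifty_mul_pRef (i : Fin 4) : 1 / 2 ≤ 50 * pRef i := by
  fin_cases i <;> norm_num [pRef]

lemma mem_Qlam_of_le_half {q : Fin 4 → ℝ} (hnonneg : ∀ i, 0 ≤ q i) (hsum : ∑ i, q i = 1)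
    (hhalf : ∀ i, q i ≤ 1 / 2) : q ∈ Qlam :=
  ⟨hnonneg, hsum, fun i => (hhalf i).trans (half_le_fifty_mul_pRef i)⟩

lemma notMem_Qlam_of_lt {q : Fin 4 → ℝ} {i : Fin 4} (h : 50 * pRef i < q i) : q ∉ Qlam :=
  fun hq => (hq.2.2 i).not_gt h

lemma Q1_mem_Qlam : Q1 ∈ Qlam := by
  refine mem_Qlam_of_le_half (fun i => ?_) ?_ (fun i => ?_)
  · fin_cases i <;> norm_num [Q1]
  · norm_num [Q1, Fin.sum_univ_succ]
  · fin_cases i <;> norm_num [Q1]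

lemma Q2_mem_Qlam : Q2 ∈ Qlam := by
  refine mem_Qlam_of_le_half (fun i => ?_) ?_ (fun i => ?_)
  · fin_cases i <;> norm_num [Q2]
  · norm_num [Q2, Fin.sum_univ_succ]
  · fin_cases i <;> norm_num [Q2]

lemma Qpaste_eq : Qpaste = ![1, 0, 0, 0] := by
  funext ω
  fin_cases ω <;> simp [Qpaste, atom1, Q1, Q2]
  norm_num

/-- `Q¹, Q² ∈ Q_λ`, the time-1 pasting equals the point mass
`(1,0,0,0)`, its first mass is `1 > 1/2`, and hence it is not in `Q_λ`; so `Q_λ` is not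
m-stable. -/
theorem Qlam_not_mstable :
    Q1 ∈ Qlam ∧ Q2 ∈ Qlam ∧
    Qpaste = ![1, 0, 0, 0] ∧
    Qpaste 0 = 1 ∧ (1 : ℝ) > 1/2 ∧
    Qpaste ∉ Qlam := by
  have hpaste_zero : Qpaste 0 = 1 := by simp [Qpaste_eq]
  refine ⟨Q1_mem_Qlam, Q2_mem_Qlam, Qpaste_eq, hpaste_zero, by norm_num, ?_⟩
  exact notMem_Qlam_of_lt (i := 0) (by norm_num [hpaste_zero, pRef])
end
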